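/- Let a, b, c ∈ ℝ³ be mutually orthogonal vectors of equal (positive) magnitude with det(a, b, c) > 0. Then there exists a spinor ψ ∈ ℂ² such that a + ib = ψᵗσψ and c = −ψ̂ᵗσψ. -/

import Mathlib

/-!
The vector w = a + ib is isotropic (w ⬝ w = 0), and every isotropic w ∈ ℂ³ equals ψᵗσψ for some
spinor ψ: take square roots ψ₁, ψ₂ of (w₁ − iw₂)/2 and −(w₁ + iw₂)/2; isotropy says
(ψ₁ψ₂)² = (w₃/2)², so after changing the sign of ψ₂ we get ψ₁ψ₂ = −w₃/2.
For such ψ the vector n = −ψ̂ᵗσψ is real, orthogonal to a and b, of length |ψ|² = |a|, and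
det(a, b, n) = |ψ|⁶ ≥ 0. A vector orthogonal to a and b is a multiple of a × b, so it is determined
by its length and the sign of det(a, b, ·); hence c = n.
-/

open Matrix Complex

/-- The first Cartan spinor matrix σ₁ = [[1,0],[0,−1]]. -/
noncomputable def sigma1 : Matrix (Fin 2) (Fin 2) ℂ := !![1, 0; 0, -1]

/-- The second Cartan spinor matrix σ₂ = [[i,0],[0,i]]. -/
noncomputable def sigma2 : Matrix (Fin 2) (Fin 2) ℂ := !![Complex.I, 0; 0, Complex.I]

/-- The third Cartan spinor matrix σ₃ = [[0,−1],[−1,0]]. -/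
noncomputable def sigma3 : Matrix (Fin 2) (Fin 2) ℂ := !![0, -1; -1, 0]

/-- For spinors φ, ψ ∈ ℂ², the vector φᵗσψ ∈ ℂ³ whose j-th component is φᵗσⱼψ. -/
noncomputable def spinorBilin (φ ψ : Fin 2 → ℂ) : Fin 3 → ℂ :=
  ![φ ⬝ᵥ sigma1.mulVec ψ, φ ⬝ᵥ sigma2.mulVec ψ, φ ⬝ᵥ sigma3.mulVec ψ]

/-- The mate (conjugate) of a spinor ψ: ψ̂ = (−ψ̄₂, ψ̄₁). -/
noncomputable def mate (ψ : Fin 2 → ℂ) : Fin 2 → ℂ :=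
  ![-(starRingEnd ℂ) (ψ 1), (starRingEnd ℂ) (ψ 0)]

/-- View a triple of reals as a vector in Euclidean 3-space. -/
noncomputable def toE3 (v : Fin 3 → ℝ) : EuclideanSpace ℝ (Fin 3) := WithLp.toLp 2 v

open ComplexConjugate

lemma inner_toE3 (u v : Fin 3 → ℝ) : inner ℝ (toE3 u) (toE3 v) = u ⬝ᵥ v := by
  rw [toE3, toE3, EuclideanSpace.inner_toLp_toLp, star_trivial, dotProduct_comm]

lemma norm_toE3_sq (u : Fin 3 → ℝ) : ‖toE3 u‖ ^ 2 = u ⬝ᵥ u := by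
  rw [← real_inner_self_eq_norm_sq, inner_toE3]

theorem eq_of_orthogonal_of_det_pos {a b c d : Fin 3 → ℝ}
    (hac : a ⬝ᵥ c = 0) (hbc : b ⬝ᵥ c = 0) (had : a ⬝ᵥ d = 0) (hbd : b ⬝ᵥ d = 0)
    (hcd : c ⬝ᵥ c = d ⬝ᵥ d) (hc : 0 < (of ![a, b, c]).det) (hd : 0 ≤ (of ![a, b, d]).det) :
    c = d := by
  set n := a ⨯₃ b
  have det_eq (v : Fin 3 → ℝ) : (of ![a, b, v]).det = n ⬝ᵥ v := by
    rw [dotProduct_comm]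
    exact ((triple_product_permutation v a b).trans (triple_product_eq_det a b v)).symm
  have cross_eq_zero (v : Fin 3 → ℝ) (hav : a ⬝ᵥ v = 0) (hbv : b ⬝ᵥ v = 0) : n ⨯₃ v = 0 := by
    simp [n, cross_cross_eq_smul_sub_smul, hav, hbv]
  -- Lagrange's identity |n × v|² = |n|²|v|² - (n ⬝ v)²
  have lagrange (v : Fin 3 → ℝ) (hv : n ⨯₃ v = 0) : (n ⬝ᵥ v) ^ 2 = (n ⬝ᵥ n) * (v ⬝ᵥ v) := by
    have := cross_dot_cross n v n v
    rw [hv, zero_dotProduct, dotProduct_comm v n] at this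
    linear_combination this
  rw [det_eq] at hc hd
  have hnc : (n ⬝ᵥ c) ^ 2 = (n ⬝ᵥ n) * (c ⬝ᵥ c) := lagrange c (cross_eq_zero c hac hbc)
  have hnd : (n ⬝ᵥ d) ^ 2 = (n ⬝ᵥ n) * (d ⬝ᵥ d) := lagrange d (cross_eq_zero d had hbd)
  have hnc_eq_nd : n ⬝ᵥ c = n ⬝ᵥ d :=
    (pow_left_inj₀ hc.le hd two_ne_zero).mp (by rw [hnc, hnd, hcd])
  have hnn : n ⬝ᵥ n ≠ 0 := fun h => by
    rw [h, zero_mul] at hnc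
    exact hc.ne' (pow_eq_zero_iff two_ne_zero |>.mp hnc)
  have hsub := lagrange (c - d) (cross_eq_zero _ (by simp [dotProduct_sub, hac, had])
    (by simp [dotProduct_sub, hbc, hbd]))
  rw [dotProduct_sub, hnc_eq_nd, sub_self, sq, zero_mul, zero_eq_mul] at hsub
  exact sub_eq_zero.mp (dotProduct_self_eq_zero.mp (hsub.resolve_left hnn))

lemma dotProduct_self_ofReal_add_I_mul_eq_zero {ι : Type*} [Fintype ι] {a b : ι → ℝ}
    (hab : a ⬝ᵥ b = 0) (hn : a ⬝ᵥ a = b ⬝ᵥ b) :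
    (fun j => (a j : ℂ) + I * b j) ⬝ᵥ (fun j => (a j : ℂ) + I * b j) = 0 := by
  calc ∑ j, ((a j : ℂ) + I * b j) * ((a j : ℂ) + I * b j)
      = ∑ j, (((a j * a j - b j * b j : ℝ) : ℂ) + I * ((2 * (a j * b j) : ℝ) : ℂ)) :=
        Finset.sum_congr rfl fun j _ => by push_cast; linear_combination (b j : ℂ) ^ 2 * I_sq
    _ = ((a ⬝ᵥ a - b ⬝ᵥ b : ℝ) : ℂ) + I * ((2 * (a ⬝ᵥ b) : ℝ) : ℂ) := by
        simp [dotProduct, Finset.sum_add_distrib, Finset.mul_sum, Finset.sum_sub_distrib]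
    _ = 0 := by simp [hn, hab]

lemma eq_re_im_of_ofReal_add_I_mul_eq {ι : Type*} {a b : ι → ℝ} {w : ι → ℂ}
    (h : ∀ j, (a j : ℂ) + I * b j = w j) : a = (fun j => (w j).re) ∧ b = (fun j => (w j).im) :=
  ⟨funext fun j => by simp [← h], funext fun j => by simp [← h]⟩

lemma spinorBilin_self (ψ : Fin 2 → ℂ) :
    spinorBilin ψ ψ = ![ψ 0 ^ 2 - ψ 1 ^ 2, I * (ψ 0 ^ 2 + ψ 1 ^ 2), -(2 * ψ 0 * ψ 1)] := by
  refine vec3_eq ?_ ?_ ?_ <;>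
    simp only [sigma1, sigma2, sigma3, vec2_dotProduct, cons_mulVec, empty_mulVec, cons_val_zero,
      cons_val_one, cons_val_fin_one] <;> ring

theorem exists_spinorBilin_self_eq (w : Fin 3 → ℂ) (hw : w ⬝ᵥ w = 0) :
    ∃ ψ, spinorBilin ψ ψ = w := by
  obtain ⟨p, hp⟩ := IsAlgClosed.exists_pow_nat_eq ((w 0 - I * w 1) / 2) two_pos
  obtain ⟨q, hq⟩ := IsAlgClosed.exists_pow_nat_eq (-(w 0 + I * w 1) / 2) two_pos
  have hpq : (p * q) ^ 2 = (-(w 2) / 2) ^ 2 := by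
    rw [vec3_dotProduct] at hw
    rw [mul_pow, hp, hq]
    linear_combination (-1/4 : ℂ) * hw + (w 1 ^ 2 / 4) * I_sq
  have of_mul_eq (q : ℂ) (hq : q ^ 2 = -(w 0 + I * w 1) / 2) (hpq : p * q = -(w 2) / 2) :
      spinorBilin ![p, q] ![p, q] = w := by
    have w_eta : w = ![w 0, w 1, w 2] := by
      funext j
      fin_cases j <;> rfl
    rw [spinorBilin_self, w_eta]
    simp only [cons_val_zero, cons_val_one]
    exact vec3_eq (by linear_combination hp - hq)
      (by linear_combination I * hp + I * hq - w 1 * I_sq) (by linear_combination -2 * hpq)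
  rcases sq_eq_sq_iff_eq_or_eq_neg.mp hpq with h | h
  · exact ⟨![p, q], of_mul_eq q hq h⟩
  · exact ⟨![p, -q], of_mul_eq (-q) (by rw [neg_sq, hq]) (by rw [mul_neg, h, neg_neg])⟩

noncomputable def spinorAxis (ψ : Fin 2 → ℂ) : Fin 3 → ℝ :=
  ![2 * (ψ 0 * conj (ψ 1)).re, 2 * (conj (ψ 0) * ψ 1).im, normSq (ψ 0) - normSq (ψ 1)]

lemma ofReal_spinorAxis (ψ : Fin 2 → ℂ) :
    ∀ j, (spinorAxis ψ j : ℂ) = -spinorBilin (mate ψ) ψ j := by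
  simp only [Fin.forall_fin_succ, IsEmpty.forall_iff, and_true, Complex.ext_iff, spinorAxis,
    spinorBilin, mate, sigma1, sigma2, sigma3, vec2_dotProduct, cons_mulVec, empty_mulVec,
    cons_val_zero, cons_val_succ, cons_val_one, cons_val_fin_one, neg_re, neg_im, add_re, add_im,
    mul_re, mul_im, conj_re, conj_im, ofReal_re, ofReal_im, I_re, I_im, one_re, one_im, zero_re,
    zero_im, normSq_apply]
  refine ⟨⟨?_, ?_⟩, ⟨?_, ?_⟩, ?_, ?_⟩ <;> ring

section SpinorFrame

variable (ψ : Fin 2 → ℂ) {a b : Fin 3 → ℝ}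

lemma dotProduct_spinorAxis_eq_zero (h : ∀ j, (a j : ℂ) + I * b j = spinorBilin ψ ψ j) :
    a ⬝ᵥ spinorAxis ψ = 0 ∧ b ⬝ᵥ spinorAxis ψ = 0 := by
  obtain ⟨rfl, rfl⟩ := eq_re_im_of_ofReal_add_I_mul_eq h
  simp only [vec3_dotProduct, spinorBilin_self, spinorAxis, Fin.isValue, cons_val, cons_val_zero,
    cons_val_one, neg_re, neg_im, add_re, add_im, sub_re, sub_im, mul_re, mul_im, conj_re, conj_im,
    I_re, I_im, re_ofNat, im_ofNat, normSq_apply, sq]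
  constructor <;> ring

lemma spinorAxis_dotProduct_self (h : ∀ j, (a j : ℂ) + I * b j = spinorBilin ψ ψ j) :
    spinorAxis ψ ⬝ᵥ spinorAxis ψ = a ⬝ᵥ a := by
  obtain ⟨rfl, rfl⟩ := eq_re_im_of_ofReal_add_I_mul_eq h
  simp only [vec3_dotProduct, spinorBilin_self, spinorAxis, Fin.isValue, cons_val, cons_val_zero,
    cons_val_one, neg_re, add_re, add_im, sub_re, mul_re, mul_im, conj_re, conj_im, I_re, I_im,
    re_ofNat, im_ofNat, normSq_apply, sq]
  ring

lemma det_spinorAxis (h : ∀ j, (a j : ℂ) + I * b j = spinorBilin ψ ψ j) :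
    (of ![a, b, spinorAxis ψ]).det = (normSq (ψ 0) + normSq (ψ 1)) ^ 3 := by
  obtain ⟨rfl, rfl⟩ := eq_re_im_of_ofReal_add_I_mul_eq h
  rw [det_fin_three]
  simp only [of_apply, spinorBilin_self, spinorAxis, Fin.isValue, cons_val, cons_val_zero,
    cons_val_one, neg_re, neg_im, add_re, add_im, sub_re, sub_im, mul_re, mul_im, conj_re, conj_im,
    I_re, I_im, re_ofNat, im_ofNat, normSq_apply, sq]
  ring

end SpinorFrame

theorem exists_spinor_of_orthogonal_triad_general (a b c : Fin 3 → ℝ)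
    (hab : inner ℝ (toE3 a) (toE3 b) = (0 : ℝ))
    (hac : inner ℝ (toE3 a) (toE3 c) = (0 : ℝ))
    (hbc : inner ℝ (toE3 b) (toE3 c) = (0 : ℝ))
    (habn : ‖toE3 a‖ = ‖toE3 b‖) (hbcn : ‖toE3 b‖ = ‖toE3 c‖)
    (hdet : 0 < (Matrix.of ![a, b, c]).det) :
    ∃ ψ : Fin 2 → ℂ,
      (∀ j, (a j : ℂ) + Complex.I * (b j : ℂ) = spinorBilin ψ ψ j) ∧
      (∀ j, (c j : ℂ) = -(spinorBilin (mate ψ) ψ j)) := by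
  rw [inner_toE3] at hab hac hbc
  have haa : a ⬝ᵥ a = b ⬝ᵥ b := by rw [← norm_toE3_sq, ← norm_toE3_sq, habn]
  have hcc : c ⬝ᵥ c = a ⬝ᵥ a := by rw [← norm_toE3_sq, ← norm_toE3_sq, habn, hbcn]
  obtain ⟨ψ, hψ⟩ :=
    exists_spinorBilin_self_eq _ (dotProduct_self_ofReal_add_I_mul_eq_zero hab haa)
  have hψab (j : Fin 3) : (a j : ℂ) + I * b j = spinorBilin ψ ψ j := by rw [hψ]
  obtain ⟨han, hbn⟩ := dotProduct_spinorAxis_eq_zero ψ hψab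
  have hc : c = spinorAxis ψ :=
    eq_of_orthogonal_of_det_pos hac hbc han hbn (by rw [hcc, spinorAxis_dotProduct_self ψ hψab])
      hdet (by
        rw [det_spinorAxis ψ hψab]
        exact pow_nonneg (add_nonneg (normSq_nonneg _) (normSq_nonneg _)) 3)
  exact ⟨ψ, hψab, fun j => by rw [hc, ofReal_spinorAxis]⟩

/-- For mutually orthogonal vectors a, b, c ∈ ℝ³ of equal positive magnitude with
det(a,b,c) > 0, there exists a spinor ψ with a + ib = ψᵗσψ and c = −ψ̂ᵗσψ. -/
theorem exists_spinor_of_orthogonal_triad (a b c : Fin 3 → ℝ)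
    (hab : inner ℝ (toE3 a) (toE3 b) = (0 : ℝ))
    (hac : inner ℝ (toE3 a) (toE3 c) = (0 : ℝ))
    (hbc : inner ℝ (toE3 b) (toE3 c) = (0 : ℝ))
    (habn : ‖toE3 a‖ = ‖toE3 b‖) (hbcn : ‖toE3 b‖ = ‖toE3 c‖)
    (hpos : 0 < ‖toE3 a‖)
    (hdet : 0 < (Matrix.of ![a, b, c]).det) :
    ∃ ψ : Fin 2 → ℂ,
      (∀ j, (a j : ℂ) + Complex.I * (b j : ℂ) = spinorBilin ψ ψ j) ∧
      (∀ j, (c j : ℂ) = -(spinorBilin (mate ψ) ψ j)) :=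
  exists_spinor_of_orthogonal_triad_general a b c hab hac hbc habn hbcn hdet
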